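/- Let (X,𝒜,μ) be a bounded charge space and f ∈ L0(X,𝒜,μ). Then for every y ∈ ℝ such that μ*(f⁻¹[y−δ, y+δ]) → 0 as δ → 0, the sets f⁻¹(−∞,y] and f⁻¹[y,∞) belong to the Peano-Jordan completion 𝒜̄ of 𝒜; moreover f⁻¹({y}) ∈ 𝒜̄ with μ̄(f⁻¹({y})) = 0. -/
import Mathlib


open Filter Set Topology

section ChargeDefs

variable {X : Type*}

/-- A field of sets on `X`: contains `∅`, closed under complements and finite unions. -/
structure IsSetField (𝒜 : Set (Set X)) : Prop where
  empty_mem : (∅ : Set X) ∈ 𝒜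
  compl_mem : ∀ A ∈ 𝒜, Aᶜ ∈ 𝒜
  union_mem : ∀ A ∈ 𝒜, ∀ B ∈ 𝒜, A ∪ B ∈ 𝒜

/-- A (bounded, non-negative) charge space: a field of sets together with a finitely
additive non-negative real-valued set function vanishing on `∅`.  (The function `μ` is
given on all of `𝒫(X)`; only its values on `𝒜` are constrained or used.) -/
structure IsCharge (𝒜 : Set (Set X)) (μ : Set X → ℝ) : Prop where
  isSetField : IsSetField 𝒜
  empty : μ ∅ = 0
  nonneg : ∀ A ∈ 𝒜, 0 ≤ μ A
  additive : ∀ A ∈ 𝒜, ∀ B ∈ 𝒜, Disjoint A B → μ (A ∪ B) = μ A + μ B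

/-- The outer charge `μ*(A) = inf {μ B : B ∈ 𝒜, A ⊆ B}`. -/
noncomputable def outerCharge (𝒜 : Set (Set X)) (μ : Set X → ℝ) (A : Set X) : ℝ :=
  sInf (μ '' {B | B ∈ 𝒜 ∧ A ⊆ B})

/-- A null function: `μ*({x : |h x| > ε}) = 0` for every `ε > 0`. -/
def IsNullFn (𝒜 : Set (Set X)) (μ : Set X → ℝ) (h : X → ℝ) : Prop :=
  ∀ ε > (0 : ℝ), outerCharge 𝒜 μ {x | ε < |h x|} = 0

/-- `f = g` almost everywhere: `f - g` is a null function. -/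
def EqAE (𝒜 : Set (Set X)) (μ : Set X → ℝ) (f g : X → ℝ) : Prop :=
  IsNullFn 𝒜 μ (fun x => f x - g x)

/-- `f ≤ g` almost everywhere: `f ≤ g + h` for some null function `h`. -/
def LeAE (𝒜 : Set (Set X)) (μ : Set X → ℝ) (f g : X → ℝ) : Prop :=
  ∃ h : X → ℝ, IsNullFn 𝒜 μ h ∧ ∀ x, f x ≤ g x + h x

/-- Hazy convergence of a sequence of functions. -/
def HazyConv (𝒜 : Set (Set X)) (μ : Set X → ℝ) (fn : ℕ → X → ℝ) (f : X → ℝ) : Prop :=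
  ∀ ε > (0 : ℝ), Tendsto (fun n => outerCharge 𝒜 μ {x | ε < |fn n x - f x|}) atTop (𝓝 0)

/-- A simple function w.r.t. the field `𝒜`: `Σ c_k 1_{A_k}` for a finite partition
`{A_k} ⊆ 𝒜` of `X`. -/
def IsSimpleFn (𝒜 : Set (Set X)) (f : X → ℝ) : Prop :=
  ∃ (n : ℕ) (c : Fin n → ℝ) (A : Fin n → Set X),
    (∀ k, A k ∈ 𝒜) ∧ (Pairwise fun i j => Disjoint (A i) (A j)) ∧
    (⋃ k, A k) = Set.univ ∧ ∀ x, f x = ∑ k, (A k).indicator (fun _ => c k) x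

/-- `T₁`-measurability: `f` is the hazy limit of a sequence of simple functions.
`MemL0 𝒜 μ f` says `f ∈ L₀(X,𝒜,μ)`. -/
def MemL0 (𝒜 : Set (Set X)) (μ : Set X → ℝ) (f : X → ℝ) : Prop :=
  ∃ fn : ℕ → X → ℝ, (∀ n, IsSimpleFn 𝒜 (fn n)) ∧ HazyConv 𝒜 μ fn f

/-- Integral of a simple function: `Σ_y y·μ(f⁻¹{y})` (a finite sum for simple `f`;
for a simple function `Σ c_k 1_{A_k}` over a partition this equals `Σ c_k μ(A_k)`). -/
noncomputable def sIntegral (μ : Set X → ℝ) (f : X → ℝ) : ℝ :=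
  ∑ᶠ y, y * μ (f ⁻¹' {y})

/-- A determining sequence for `f`: simple functions converging hazily to `f` with
`∫ |f_n - f_m| dμ → 0` as `m, n → ∞`. -/
def IsDetermining (𝒜 : Set (Set X)) (μ : Set X → ℝ) (fn : ℕ → X → ℝ) (f : X → ℝ) : Prop :=
  (∀ n, IsSimpleFn 𝒜 (fn n)) ∧ HazyConv 𝒜 μ fn f ∧
    Tendsto (fun mn : ℕ × ℕ => sIntegral μ (fun x => |fn mn.1 x - fn mn.2 x|)) atTop (𝓝 0)

/-- Integrability w.r.t. a charge: existence of a determining sequence.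
`MemL1 𝒜 μ f` says `f ∈ L₁(X,𝒜,μ)`. -/
def MemL1 (𝒜 : Set (Set X)) (μ : Set X → ℝ) (f : X → ℝ) : Prop :=
  ∃ fn : ℕ → X → ℝ, IsDetermining 𝒜 μ fn f

-- The integral `∫ f dμ` of an integrable function: the limit of the integrals of
-- any determining sequence (this limit is independent of the choice).
open Classical in
noncomputable def chargeIntegral (𝒜 : Set (Set X)) (μ : Set X → ℝ) (f : X → ℝ) : ℝ :=
  if h : ∃ fn : ℕ → X → ℝ, IsDetermining 𝒜 μ fn f then
    limUnder atTop (fun n => sIntegral μ (h.choose n))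
  else 0

/-- Smoothness: for every `ε > 0` there is `k > 0` with `μ*({x : |f x| > k}) < ε`. -/
def SmoothFn (𝒜 : Set (Set X)) (μ : Set X → ℝ) (f : X → ℝ) : Prop :=
  ∀ ε > (0 : ℝ), ∃ k > (0 : ℝ), outerCharge 𝒜 μ {x | k < |f x|} < ε

/-- The field of the Peano-Jordan completion of `(X,𝒜,μ)`. -/
def pjField (𝒜 : Set (Set X)) (μ : Set X → ℝ) : Set (Set X) :=
  {A | ∀ ε > (0 : ℝ), ∃ B ∈ 𝒜, ∃ C ∈ 𝒜, B ⊆ A ∧ A ⊆ C ∧ μ (C \ B) < ε}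

/-- The charge of the Peano-Jordan completion: `μ̄(A) = sup {μ B : B ∈ 𝒜, B ⊆ A}`. -/
noncomputable def pjCharge (𝒜 : Set (Set X)) (μ : Set X → ℝ) (A : Set X) : ℝ :=
  sSup (μ '' {B | B ∈ 𝒜 ∧ B ⊆ A})

/-- The pseudometric `d` on `L₀`. -/
noncomputable def hazyDist (𝒜 : Set (Set X)) (μ : Set X → ℝ) (f g : X → ℝ) : ℝ :=
  sInf {ε : ℝ | 0 < ε ∧ outerCharge 𝒜 μ {x | ε < |f x - g x|} < ε}

/-- `f ∈ L_p(X,𝒜,μ)` for `p ∈ [1,∞)`: `f` is `T₁`-measurable and `|f|^p` integrable. -/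
def MemLpC (𝒜 : Set (Set X)) (μ : Set X → ℝ) (p : ℝ) (f : X → ℝ) : Prop :=
  MemL0 𝒜 μ f ∧ MemL1 𝒜 μ (fun x => |f x| ^ p)

/-- `f ∈ L_p` for `p ∈ {0} ∪ [1,∞)`. -/
def MemLp' (𝒜 : Set (Set X)) (μ : Set X → ℝ) (p : ℝ) (f : X → ℝ) : Prop :=
  if p = 0 then MemL0 𝒜 μ f else MemLpC 𝒜 μ p f

/-- The distance on `L_p`: the pseudometric `d` for `p = 0`, and
`‖f - g‖_p = (∫ |f-g|^p dμ)^(1/p)` for `p ≥ 1`. -/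
noncomputable def LpDist (𝒜 : Set (Set X)) (μ : Set X → ℝ) (p : ℝ) (f g : X → ℝ) : ℝ :=
  if p = 0 then hazyDist 𝒜 μ f g
  else (chargeIntegral 𝒜 μ fun x => |f x - g x| ^ p) ^ (1 / p)

/-- The collection of null sets of a charge space. -/
def nullSets (𝒜 : Set (Set X)) (μ : Set X → ℝ) : Set (Set X) :=
  {A | outerCharge 𝒜 μ A = 0}

/-- The smallest field of sets on `X` containing a given collection `𝒞`. -/
def genSetField (𝒞 : Set (Set X)) : Set (Set X) :=
  ⋂₀ {𝒟 | IsSetField 𝒟 ∧ 𝒞 ⊆ 𝒟}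

end ChargeDefs

section Aux

variable {X : Type*} {𝒜 : Set (Set X)} {μ : Set X → ℝ}

lemma IsSetField.univ_mem (h : IsSetField 𝒜) : (Set.univ : Set X) ∈ 𝒜 := by
  simpa using h.compl_mem _ h.empty_mem

lemma IsSetField.inter_mem (h : IsSetField 𝒜) {A B : Set X} (hA : A ∈ 𝒜) (hB : B ∈ 𝒜) :
    A ∩ B ∈ 𝒜 := by
  have := h.compl_mem _ (h.union_mem _ (h.compl_mem _ hA) _ (h.compl_mem _ hB))
  simpa [Set.compl_union] using this

lemma IsSetField.diff_mem (h : IsSetField 𝒜) {A B : Set X} (hA : A ∈ 𝒜) (hB : B ∈ 𝒜) :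
    A \ B ∈ 𝒜 := h.inter_mem hA (h.compl_mem _ hB)

lemma IsSetField.finset_biUnion_mem {ι : Type*} (h : IsSetField 𝒜) (s : Finset ι)
    (A : ι → Set X) (hA : ∀ i ∈ s, A i ∈ 𝒜) : (⋃ i ∈ s, A i) ∈ 𝒜 := by
  classical
  induction s using Finset.induction with
  | empty => simpa using h.empty_mem
  | @insert a s ha ih =>
    rw [Finset.set_biUnion_insert]
    exact h.union_mem _ (hA _ (Finset.mem_insert_self _ _)) _
      (ih fun i hi => hA i (Finset.mem_insert_of_mem hi))

lemma IsCharge.mono (hμ : IsCharge 𝒜 μ) {A B : Set X} (hA : A ∈ 𝒜) (hB : B ∈ 𝒜)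
    (hAB : A ⊆ B) : μ A ≤ μ B := by
  have hd : B \ A ∈ 𝒜 := hμ.isSetField.diff_mem hB hA
  have h1 : μ (A ∪ B \ A) = μ A + μ (B \ A) :=
    hμ.additive A hA (B \ A) hd disjoint_sdiff_self_right
  rw [Set.union_diff_cancel hAB] at h1
  linarith [hμ.nonneg _ hd]

lemma IsCharge.subadd (hμ : IsCharge 𝒜 μ) {A B : Set X} (hA : A ∈ 𝒜) (hB : B ∈ 𝒜) :
    μ (A ∪ B) ≤ μ A + μ B := by
  have hd : B \ A ∈ 𝒜 := hμ.isSetField.diff_mem hB hA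
  have h1 : μ (A ∪ B \ A) = μ A + μ (B \ A) :=
    hμ.additive A hA (B \ A) hd disjoint_sdiff_self_right
  rw [Set.union_diff_self] at h1
  have := hμ.mono hd hB Set.diff_subset
  linarith

/-- Extract a cover of `A` witnessing `outerCharge 𝒜 μ A < ε`. -/
lemma exists_cover_of_outerCharge_lt (hμ : IsCharge 𝒜 μ) {A : Set X} {ε : ℝ}
    (h : outerCharge 𝒜 μ A < ε) : ∃ D ∈ 𝒜, A ⊆ D ∧ μ D < ε := by
  have hne : (μ '' {B | B ∈ 𝒜 ∧ A ⊆ B}).Nonempty :=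
    ⟨μ Set.univ, Set.univ, ⟨hμ.isSetField.univ_mem, Set.subset_univ _⟩, rfl⟩
  obtain ⟨v, ⟨D, ⟨hD, hAD⟩, rfl⟩, hv⟩ := exists_lt_of_csInf_lt hne h
  exact ⟨D, hD, hAD, hv⟩

lemma le_outerCharge (hμ : IsCharge 𝒜 μ) {B A : Set X} (hB : B ∈ 𝒜) (hBA : B ⊆ A) :
    μ B ≤ outerCharge 𝒜 μ A := by
  refine le_csInf ⟨μ Set.univ, Set.univ, ⟨hμ.isSetField.univ_mem, Set.subset_univ _⟩, rfl⟩ ?_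
  rintro v ⟨D, ⟨hD, hAD⟩, rfl⟩
  exact hμ.mono hB hD (hBA.trans hAD)

lemma IsSimpleFn.preimage_mem (h : IsSetField 𝒜) {g : X → ℝ} (hg : IsSimpleFn 𝒜 g)
    (T : Set ℝ) : g ⁻¹' T ∈ 𝒜 := by
  classical
  obtain ⟨n, c, A, hA, hdisj, hcover, hval⟩ := hg
  have hgx : ∀ x k, x ∈ A k → g x = c k := by
    intro x k hk
    rw [hval x, Finset.sum_eq_single k]
    · simp [Set.indicator_of_mem hk]
    · intro j _ hj
      exact Set.indicator_of_notMem
        (fun hxj => (Set.disjoint_left.mp (hdisj hj) hxj) hk) _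
    · simp
  have key : g ⁻¹' T = ⋃ k ∈ Finset.univ.filter (fun k => c k ∈ T), A k := by
    ext x
    obtain ⟨k, hk⟩ : ∃ k, x ∈ A k := by
      have : x ∈ ⋃ k, A k := hcover ▸ Set.mem_univ x
      exact Set.mem_iUnion.mp this
    simp only [Set.mem_preimage, Set.mem_iUnion, Finset.mem_filter, Finset.mem_univ,
      true_and, exists_prop]
    constructor
    · intro hT
      exact ⟨k, by rwa [← hgx x k hk], hk⟩
    · rintro ⟨j, hj, hxj⟩
      rwa [hgx x j hxj]
  rw [key]
  exact h.finset_biUnion_mem _ _ fun i _ => hA i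

/-- From the atom hypothesis, get small covers of `f ⁻¹' Icc (y-δ) (y+δ)`. -/
lemma exists_delta (𝒜 : Set (Set X)) (μ : Set X → ℝ) {f : X → ℝ} {y : ℝ}
    (hy : Filter.Tendsto (fun δ => outerCharge 𝒜 μ (f ⁻¹' Set.Icc (y - δ) (y + δ)))
      (nhdsWithin 0 (Set.Ioi 0)) (nhds 0)) {ε : ℝ} (hε : 0 < ε) :
    ∃ δ > (0:ℝ), outerCharge 𝒜 μ (f ⁻¹' Set.Icc (y - δ) (y + δ)) < ε := by
  have h1 : ∀ᶠ δ in nhdsWithin (0:ℝ) (Set.Ioi 0),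
      outerCharge 𝒜 μ (f ⁻¹' Set.Icc (y - δ) (y + δ)) < ε :=
    hy.eventually (gt_mem_nhds hε)
  have h2 : ∀ᶠ δ in nhdsWithin (0:ℝ) (Set.Ioi 0), δ ∈ Set.Ioi (0:ℝ) :=
    eventually_mem_nhdsWithin
  obtain ⟨δ, hδ1, hδ2⟩ := (h1.and h2).exists
  exact ⟨δ, hδ2, hδ1⟩

/-- The key sandwich lemma, parameterized by a predicate `P` stable away from `y`. -/
lemma pjField_preimage_of (hμ : IsCharge 𝒜 μ) {f : X → ℝ} (hf : MemL0 𝒜 μ f) {y : ℝ}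
    (hy : Filter.Tendsto (fun δ => outerCharge 𝒜 μ (f ⁻¹' Set.Icc (y - δ) (y + δ)))
      (nhdsWithin 0 (Set.Ioi 0)) (nhds 0)) (P : ℝ → Prop)
    (hP : ∀ δ : ℝ, 0 < δ → ∀ u v : ℝ, |u - v| ≤ δ / 2 →
      v ∉ Set.Icc (y - δ) (y + δ) → (P u ↔ P v)) :
    f ⁻¹' {v | P v} ∈ pjField 𝒜 μ := by
  intro ε hε
  obtain ⟨δ, hδ, hsmall⟩ := exists_delta 𝒜 μ hy (by positivity : (0:ℝ) < ε / 3)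
  obtain ⟨D, hD, hDsub, hDμ⟩ := exists_cover_of_outerCharge_lt hμ hsmall
  obtain ⟨fn, hsimp, hconv⟩ := hf
  have hctend := hconv (δ / 2) (by positivity)
  have : ∀ᶠ n in Filter.atTop,
      outerCharge 𝒜 μ {x | δ / 2 < |fn n x - f x|} < ε / 3 :=
    hctend.eventually (gt_mem_nhds (by positivity))
  obtain ⟨n, hn⟩ := this.exists
  obtain ⟨E, hE, hEsub, hEμ⟩ := exists_cover_of_outerCharge_lt hμ hn
  set S := fn n ⁻¹' {v | P v} with hSdef
  have hS : S ∈ 𝒜 := (hsimp n).preimage_mem hμ.isSetField _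
  have hDE : D ∪ E ∈ 𝒜 := hμ.isSetField.union_mem _ hD _ hE
  refine ⟨S \ (D ∪ E), hμ.isSetField.diff_mem hS hDE, S ∪ (D ∪ E),
    hμ.isSetField.union_mem _ hS _ hDE, ?_, ?_, ?_⟩
  · -- S \ (D ∪ E) ⊆ f ⁻¹' {v | P v}
    rintro x ⟨hxS, hxDE⟩
    have hfar : |fn n x - f x| ≤ δ / 2 := by
      by_contra h
      exact hxDE (Or.inr (hEsub (by push_neg at h; exact h)))
    have hout : f x ∉ Set.Icc (y - δ) (y + δ) := fun h => hxDE (Or.inl (hDsub h))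
    exact (hP δ hδ (fn n x) (f x) hfar hout).mp hxS
  · -- f ⁻¹' {v | P v} ⊆ S ∪ (D ∪ E)
    intro x hx
    by_cases hxDE : x ∈ D ∪ E
    · exact Or.inr hxDE
    · left
      have hfar : |fn n x - f x| ≤ δ / 2 := by
        by_contra h
        exact hxDE (Or.inr (hEsub (by push_neg at h; exact h)))
      have hout : f x ∉ Set.Icc (y - δ) (y + δ) := fun h => hxDE (Or.inl (hDsub h))
      exact (hP δ hδ (fn n x) (f x) hfar hout).mpr hx
  · -- measure estimate
    have hsub : (S ∪ (D ∪ E)) \ (S \ (D ∪ E)) ⊆ D ∪ E := by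
      rintro x ⟨hx1, hx2⟩
      rcases hx1 with hx1 | hx1
      · by_contra h; exact hx2 ⟨hx1, h⟩
      · exact hx1
    calc μ ((S ∪ (D ∪ E)) \ (S \ (D ∪ E)))
        ≤ μ (D ∪ E) := hμ.mono
          (hμ.isSetField.diff_mem (hμ.isSetField.union_mem _ hS _ hDE)
            (hμ.isSetField.diff_mem hS hDE)) hDE hsub
      _ ≤ μ D + μ E := hμ.subadd hD hE
      _ < ε := by linarith

end Aux

/-- For `f ∈ L₀`, if `μ*(f⁻¹[y-δ, y+δ]) → 0` as `δ → 0`, then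
`f⁻¹(-∞,y]`, `f⁻¹[y,∞)` and `f⁻¹{y}` lie in the Peano-Jordan completion, and
`μ̄(f⁻¹{y}) = 0`. -/
theorem atom_implies_ray_inverse_image {X : Type*} (𝒜 : Set (Set X)) (μ : Set X → ℝ)
    (hμ : IsCharge 𝒜 μ) (f : X → ℝ) (hf : MemL0 𝒜 μ f) (y : ℝ)
    (hy : Filter.Tendsto (fun δ => outerCharge 𝒜 μ (f ⁻¹' Set.Icc (y - δ) (y + δ)))
      (nhdsWithin 0 (Set.Ioi 0)) (nhds 0)) :
    f ⁻¹' Set.Iic y ∈ pjField 𝒜 μ ∧ f ⁻¹' Set.Ici y ∈ pjField 𝒜 μ ∧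
      f ⁻¹' {y} ∈ pjField 𝒜 μ ∧ pjCharge 𝒜 μ (f ⁻¹' {y}) = 0 := by
  obtain ⟨fn, hsimp, hconv⟩ := id hf
  have hIic : f ⁻¹' Set.Iic y ∈ pjField 𝒜 μ := by
    have := pjField_preimage_of hμ hf hy (fun v => v ≤ y) ?_
    · simpa [Set.Iic] using this
    · intro δ hδ u v huv hout
      simp only [Set.mem_Icc, not_and_or, not_le] at hout
      rw [abs_le] at huv
      rcases hout with h | h
      · constructor <;> intro <;> linarith
      · constructor <;> intro <;> linarith
  have hIci : f ⁻¹' Set.Ici y ∈ pjField 𝒜 μ := by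
    have := pjField_preimage_of hμ hf hy (fun v => y ≤ v) ?_
    · simpa [Set.Ici] using this
    · intro δ hδ u v huv hout
      simp only [Set.mem_Icc, not_and_or, not_le] at hout
      rw [abs_le] at huv
      rcases hout with h | h
      · constructor <;> intro <;> linarith
      · constructor <;> intro <;> linarith
  have hcov : ∀ ε > (0:ℝ), ∃ D ∈ 𝒜, f ⁻¹' {y} ⊆ D ∧ μ D < ε := by
    intro ε hε
    obtain ⟨δ, hδ, hsmall⟩ := exists_delta 𝒜 μ hy hε
    obtain ⟨D, hD, hDsub, hDμ⟩ := exists_cover_of_outerCharge_lt hμ hsmall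
    refine ⟨D, hD, ?_, hDμ⟩
    intro x hx
    simp only [Set.mem_preimage, Set.mem_singleton_iff] at hx
    apply hDsub
    simp only [Set.mem_preimage, Set.mem_Icc, hx]
    constructor <;> linarith
  have hsing : f ⁻¹' {y} ∈ pjField 𝒜 μ := by
    intro ε hε
    obtain ⟨D, hD, hDsub, hDμ⟩ := hcov ε hε
    exact ⟨∅, hμ.isSetField.empty_mem, D, hD, Set.empty_subset _, hDsub,
      by simpa using hDμ⟩
  refine ⟨hIic, hIci, hsing, ?_⟩
  have hle0 : ∀ B ∈ 𝒜, B ⊆ f ⁻¹' {y} → μ B ≤ 0 := by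
    intro B hB hBsub
    by_contra h
    push_neg at h
    obtain ⟨D, hD, hDsub, hDμ⟩ := hcov (μ B) h
    exact absurd (hμ.mono hB hD (hBsub.trans hDsub)) (not_le.mpr hDμ)
  apply le_antisymm
  · refine csSup_le ⟨μ ∅, ⟨∅, ⟨hμ.isSetField.empty_mem, Set.empty_subset _⟩, rfl⟩⟩ ?_
    rintro v ⟨B, ⟨hB, hBsub⟩, rfl⟩
    exact hle0 B hB hBsub
  · rw [← hμ.empty]
    apply le_csSup
    · exact ⟨0, by rintro v ⟨B, ⟨hB, hBsub⟩, rfl⟩; exact hle0 B hB hBsub⟩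
    · exact ⟨∅, ⟨hμ.isSetField.empty_mem, Set.empty_subset _⟩, rfl⟩
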